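/- Let A = (a_1,…,a_p) be a finite list of vectors in ℕ^n, A also denoting the n×p matrix with columns a_1,…,a_p, and let b ∈ ℕ^n be nonzero. Then ⟨A⟩ and ⟨b⟩ can be glued (i.e. there exist positive integers k_1, k_2 such that for C = k_1A ∪ {k_2b}, I_C = I_A + ⟨ρ⟩ for some binomial ρ = y^d − x^α with d > 0 and α ∈ ℕ^p nonzero) if and only if some positive multiple of b belongs to ⟨A⟩, equivalently if and only if the linear system A·X = d·b has a solution X ∈ ℕ^p for some positive integer d. -/

import Mathlib

open MvPolynomial

/-- The toric ideal `I_A ⊆ k[x_j : j ∈ σ]` of a family `A` of vectors in `ℕ^n`: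
the kernel of the `k`-algebra map sending `x_j` to `t^{a_j} = ∏ i, t_i^{(a_j)_i}`. -/
noncomputable def toricIdeal (k : Type) [Field k] {σ : Type} {n : ℕ} (A : σ → Fin n → ℕ) :
    Ideal (MvPolynomial σ k) :=
  RingHom.ker (aeval (R := k) fun j => ∏ i, (X i : MvPolynomial (Fin n) k) ^ A j i)

/-- `⟨A ∪ {b}⟩` is a gluing of `⟨A⟩` and `⟨b⟩`: `I_C = I_A + ⟨y^d − x^α⟩`
for some `d > 0` and `α ≠ 0`. -/
def IsGluingSingle (k : Type) [Field k] {n p : ℕ}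
    (A : Fin p → Fin n → ℕ) (b : Fin n → ℕ) : Prop :=
  ∃ (d : ℕ) (α : Fin p → ℕ), 0 < d ∧ α ≠ 0 ∧
    toricIdeal k (Sum.elim A fun _ : Unit => b) =
      Ideal.map (rename Sum.inl) (toricIdeal k A) ⊔
      Ideal.span {(X (Sum.inr ()) ^ d : MvPolynomial (Fin p ⊕ Unit) k) -
        ∏ j, X (Sum.inl j) ^ α j}

/-- `⟨A⟩` and `⟨b⟩` can be glued. -/
def CanBeGluedSingle (k : Type) [Field k] {n p : ℕ}
    (A : Fin p → Fin n → ℕ) (b : Fin n → ℕ) : Prop :=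
  ∃ k1 k2 : ℕ, 0 < k1 ∧ 0 < k2 ∧
    IsGluingSingle k (fun j i => k1 * A j i) (fun i => k2 * b i)

/-! If `A c = b`, the substitution `y ↦ x^c` is a retraction of `k[x, y]` onto `k[x]` through
which the monomial map of `A ∪ {b}` factors; every polynomial is congruent to its retraction
modulo `y - x^c`, so `I_{A ∪ {b}} = I_A + ⟨y - x^c⟩`. Conversely, the binomial `y^d - x^α` of a
gluing lies in the toric ideal, and since distinct exponent vectors give distinct monomials its
two images agree exponentwise: `A α = d b`. -/

namespace MvPolynomial

theorem prod_X_pow_eq_monomial_equivFunOnFinite {R σ : Type*} [CommSemiring R] [Fintype σ]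
    (c : σ → ℕ) :
    ∏ i, (X i : MvPolynomial σ R) ^ c i = monomial (Finsupp.equivFunOnFinite.symm c) 1 := by
  rw [monomial_eq, C_1, one_mul, Finsupp.prod_fintype _ _ fun i => pow_zero _]
  rfl

theorem prod_X_pow_injective {R σ : Type*} [CommSemiring R] [Nontrivial R] [Fintype σ] :
    Function.Injective fun c : σ → ℕ => ∏ i, (X i : MvPolynomial σ R) ^ c i := by
  intro c c' h
  simp only [prod_X_pow_eq_monomial_equivFunOnFinite] at h
  exact Finsupp.equivFunOnFinite.symm.injective (monomial_left_injective one_ne_zero h)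

end MvPolynomial

section ToricMap

variable {R : Type*} [CommSemiring R] {σ τ : Type} {n : ℕ}

noncomputable abbrev toricMap (R : Type*) [CommSemiring R] (A : σ → Fin n → ℕ) :
    MvPolynomial σ R →ₐ[R] MvPolynomial (Fin n) R :=
  aeval fun j => ∏ i, X i ^ A j i

theorem mem_toricIdeal_iff {k : Type} [Field k] {A : σ → Fin n → ℕ} {f : MvPolynomial σ k} :
    f ∈ toricIdeal k A ↔ toricMap k A f = 0 :=
  Iff.rfl

theorem toricMap_X (A : σ → Fin n → ℕ) (j : σ) :
    toricMap R A (X j) = ∏ i, X i ^ A j i :=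
  aeval_X _ _

theorem toricMap_X_pow (A : σ → Fin n → ℕ) (j : σ) (d : ℕ) :
    toricMap R A (X j ^ d) = ∏ i, X i ^ (d * A j i) := by
  rw [map_pow, toricMap_X, ← Finset.prod_pow]
  simp only [← pow_mul, mul_comm]

theorem toricMap_prod_X_pow [Fintype σ] (A : σ → Fin n → ℕ) (c : σ → ℕ) :
    toricMap R A (∏ j, X j ^ c j) = ∏ i, X i ^ ∑ j, c j * A j i := by
  simp only [map_prod, toricMap_X_pow]
  rw [Finset.prod_comm]
  simp only [Finset.prod_pow_eq_pow_sum]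

theorem toricMap_rename (A : σ → Fin n → ℕ) (f : τ → σ) (g : MvPolynomial τ R) :
    toricMap R A (rename f g) = toricMap R (A ∘ f) g :=
  aeval_rename _ _ _

end ToricMap

theorem sub_rename_aeval_mem_span_X_sub {R σ : Type*} [CommRing R] (m : MvPolynomial σ R)
    (f : MvPolynomial (σ ⊕ Unit) R) :
    f - rename Sum.inl (aeval (Sum.elim X fun _ => m) f) ∈
      Ideal.span {X (Sum.inr ()) - rename Sum.inl m} := by
  set I := Ideal.span {(X (Sum.inr ()) : MvPolynomial (σ ⊕ Unit) R) - rename Sum.inl m}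
  have hmk : ((Ideal.Quotient.mkₐ R I).comp (rename Sum.inl)).comp
      (aeval (Sum.elim X fun _ => m)) = Ideal.Quotient.mkₐ R I := by
    refine algHom_ext fun j => ?_
    rcases j with j | u
    · simp
    · simp only [AlgHom.comp_apply, aeval_X, Sum.elim_inr, Ideal.Quotient.mkₐ_eq_mk]
      refine Ideal.Quotient.eq.mpr (neg_mem_iff.mp ?_)
      simp [I]
  rw [← Ideal.Quotient.eq, ← Ideal.Quotient.mkₐ_eq_mk R]
  exact (DFunLike.congr_fun hmk f).symm

section Gluing

variable {k : Type} [Field k] {σ : Type} [Fintype σ] {n : ℕ}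

theorem sum_mul_eq_of_binomial_mem_toricIdeal {A : σ → Fin n → ℕ} {b : Fin n → ℕ} {d : ℕ}
    {α : σ → ℕ} (h : (X (Sum.inr ()) ^ d : MvPolynomial (σ ⊕ Unit) k) -
      ∏ j, X (Sum.inl j) ^ α j ∈ toricIdeal k (Sum.elim A fun _ : Unit => b)) :
    ∀ i, ∑ j, α j * A j i = d * b i := by
  have hinl : ∏ j, (X (Sum.inl j) : MvPolynomial (σ ⊕ Unit) k) ^ α j =
      rename Sum.inl (∏ j, X j ^ α j) := by
    simp only [map_prod, map_pow, rename_X]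
  rw [mem_toricIdeal_iff, hinl, map_sub, sub_eq_zero, toricMap_X_pow, toricMap_rename,
    Sum.elim_comp_inl, toricMap_prod_X_pow] at h
  exact fun i => (congrFun (prod_X_pow_injective h) i).symm

theorem toricIdeal_sum_elim_eq_sup_span {A : σ → Fin n → ℕ} {b : Fin n → ℕ} (c : σ → ℕ)
    (h : ∀ i, ∑ j, c j * A j i = b i) :
    toricIdeal k (Sum.elim A fun _ : Unit => b) =
      Ideal.map (rename Sum.inl) (toricIdeal k A) ⊔
      Ideal.span {(X (Sum.inr ()) : MvPolynomial (σ ⊕ Unit) k) - ∏ j, X (Sum.inl j) ^ c j} := by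
  set m : MvPolynomial σ k := ∏ j, X j ^ c j
  set e : MvPolynomial (σ ⊕ Unit) k →ₐ[k] MvPolynomial σ k := aeval (Sum.elim X fun _ => m)
  have hinl : ∏ j, (X (Sum.inl j) : MvPolynomial (σ ⊕ Unit) k) ^ c j = rename Sum.inl m := by
    simp only [m, map_prod, map_pow, rename_X]
  have he_rename (g : MvPolynomial σ k) : e (rename Sum.inl g) = g := by
    simp only [e, aeval_rename, Sum.elim_comp_inl, aeval_X_left_apply]
  have hfactor (f : MvPolynomial (σ ⊕ Unit) k) :
      toricMap k (Sum.elim A fun _ => b) f = toricMap k A (e f) := by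
    suffices toricMap k (Sum.elim A fun _ => b) = (toricMap k A).comp e from
      DFunLike.congr_fun this f
    refine algHom_ext fun j => ?_
    rcases j with j | u
    · simp [e]
    · simp only [AlgHom.comp_apply, e, aeval_X, Sum.elim_inr, m, toricMap_prod_X_pow, h]
  rw [hinl]
  apply le_antisymm
  · intro f hf
    rw [mem_toricIdeal_iff, hfactor] at hf
    rw [← add_sub_cancel (rename Sum.inl (e f)) f]
    exact add_mem (Ideal.mem_sup_left (Ideal.mem_map_of_mem _ hf))
      (Ideal.mem_sup_right (sub_rename_aeval_mem_span_X_sub m f))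
  · refine sup_le ?_ ?_
    · rw [Ideal.map_le_iff_le_comap]
      intro g hg
      rw [Ideal.mem_comap, mem_toricIdeal_iff, hfactor, he_rename]
      exact hg
    · rw [Ideal.span_le, Set.singleton_subset_iff, SetLike.mem_coe, mem_toricIdeal_iff, hfactor,
        map_sub, he_rename]
      simp [e]

end Gluing

/-- Simple split characterization: `⟨A⟩` and `⟨b⟩` can be glued if and only if some positive
multiple of `b` lies in `⟨A⟩`, i.e. `A·X = d·b` has a solution `X ∈ ℕ^p` for some `d > 0`. -/
theorem simple_split_glue_iff (k : Type) [Field k] {n p : ℕ}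
    (A : Fin p → Fin n → ℕ) (b : Fin n → ℕ) (hb : b ≠ 0) :
    CanBeGluedSingle k A b ↔
      ∃ d : ℕ, 0 < d ∧ ∃ Xv : Fin p → ℕ, ∀ i, ∑ j, Xv j * A j i = d * b i := by
  constructor
  · rintro ⟨k1, k2, -, hk2, d, α, hd, -, hglue⟩
    have hρ := hglue ▸ Ideal.mem_sup_right (Ideal.mem_span_singleton_self _)
    refine ⟨d * k2, Nat.mul_pos hd hk2, fun j => α j * k1, fun i => ?_⟩
    calc ∑ j, α j * k1 * A j i = ∑ j, α j * (k1 * A j i) := by simp only [mul_assoc]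
      _ = d * (k2 * b i) := sum_mul_eq_of_binomial_mem_toricIdeal hρ i
      _ = d * k2 * b i := (mul_assoc _ _ _).symm
  · rintro ⟨d, hd, Xv, hXv⟩
    have hXv_ne : Xv ≠ 0 := by
      rintro rfl
      refine hb (funext fun i => ?_)
      simpa [hd.ne'] using (hXv i).symm
    refine ⟨1, d, one_pos, hd, 1, Xv, one_pos, hXv_ne, ?_⟩
    simpa only [one_mul, pow_one] using toricIdeal_sum_elim_eq_sup_span (k := k) Xv hXv
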